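/- (Alicki–Fannes ergotropy identity, single-copy upper bound) Let H be Hermitian with ground energy 0, β > 0, τ_β = e^{-βH}/Z. For any density matrix ρ and any unitary U, Tr(Hρ) - Tr(H UρU†) ≤ (1/β) S(ρ‖τ_β); moreover when β = β* is chosen so that S(τ_{β*}) = S(ρ), the quantity (1/β*) S(ρ‖τ_{β*}) = Tr(Hρ) - Tr(H τ_{β*}), i.e. the bound equals the energy gap between ρ and the iso-entropic Gibbs state. -/

import Mathlib

open Matrix BigOperators Finset
open scoped Kronecker ComplexOrder

noncomputable section

variable {n : Type*} [Fintype n] [DecidableEq n]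

/-- Functional calculus for Hermitian matrices (junk value `0` otherwise). -/
def matFun (f : ℝ → ℝ) (A : Matrix n n ℂ) : Matrix n n ℂ :=
  if hA : A.IsHermitian then
    (hA.eigenvectorUnitary : Matrix n n ℂ) *
      Matrix.diagonal (fun i => (f (hA.eigenvalues i) : ℂ)) *
      star (hA.eigenvectorUnitary : Matrix n n ℂ)
  else 0

/-- Von Neumann entropy (natural log). -/
def vnEntropy (A : Matrix n n ℂ) : ℝ :=
  if hA : A.IsHermitian then ∑ i, Real.negMulLog (hA.eigenvalues i) else 0

/-- Umegaki relative entropy `Tr ρ (log ρ - log σ)`. -/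
def relEnt (ρ σ : Matrix n n ℂ) : ℝ :=
  ((ρ * (matFun Real.log ρ - matFun Real.log σ)).trace).re

/-- Partition function `Z = Tr e^{-βH}`. -/
def gibbsZ (β : ℝ) (H : Matrix n n ℂ) : ℝ :=
  ((matFun (fun x => Real.exp (-(β * x))) H).trace).re

/-- Gibbs (thermal) state `e^{-βH}/Z`. -/
def gibbs (β : ℝ) (H : Matrix n n ℂ) : Matrix n n ℂ :=
  ((gibbsZ β H : ℂ)⁻¹) • matFun (fun x => Real.exp (-(β * x))) H

/-- Density matrix predicate. -/
def IsDensity (ρ : Matrix n n ℂ) : Prop := ρ.PosSemidef ∧ ρ.trace = 1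

def IsUnitaryMat (U : Matrix n n ℂ) : Prop := U ∈ Matrix.unitaryGroup n ℂ

/-- Outer product `|v⟩⟨v|`. -/
def outer {m : Type*} (v : m → ℂ) : Matrix m m ℂ :=
  Matrix.of fun i j => v i * (starRingEnd ℂ) (v j)

/-- Unnormalized maximally entangled vector `∑ₓ |x⟩|x⟩`. -/
def maxEnt (d : ℕ) : Fin d × Fin d → ℂ := fun p => if p.1 = p.2 then 1 else 0

/-- Positive square root of a Hermitian matrix (via eigenvalues). -/
def matSqrt (A : Matrix n n ℂ) : Matrix n n ℂ := matFun Real.sqrt A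

/-- Partial trace over the first tensor factor. -/
def ptraceFst {m k : Type*} [Fintype m] (ρ : Matrix (m × k) (m × k) ℂ) : Matrix k k ℂ :=
  Matrix.of fun j1 j2 => ∑ i, ρ (i, j1) (i, j2)

/-- Partial trace over the second tensor factor. -/
def ptraceSnd {m k : Type*} [Fintype k] (ρ : Matrix (m × k) (m × k) ℂ) : Matrix m m ℂ :=
  Matrix.of fun i1 i2 => ∑ j, ρ (i1, j) (i2, j)

/-!
Since `log τ_β = -β H - log Z`, the relative entropy to the Gibbs state of any state `σ` is
`S(σ‖τ_β) = -S(σ) + β Tr(Hσ) + log Z`. A unitary `U` preserves `S(ρ)`, so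
`S(ρ‖τ_β) - S(UρU†‖τ_β) = β (Tr(Hρ) - Tr(HUρU†))`, and Klein's inequality `S(UρU†‖τ_β) ≥ 0`
gives the bound. Applied to `σ = τ_β` itself, where `S(τ_β‖τ_β) = 0`, the same formula gives
`S(τ_β) = β Tr(Hτ_β) + log Z`, which turns the bound into the energy gap when `S(τ_β) = S(ρ)`.
-/

theorem matFun_eq_cfc (f : ℝ → ℝ) {A : Matrix n n ℂ} (hA : A.IsHermitian) :
    matFun f A = cfc f A := by
  rw [matFun, dif_pos hA, hA.cfc_eq]
  rfl

theorem Matrix.IsHermitian.trace_cfc {𝕜 : Type*} [RCLike 𝕜] {A : Matrix n n 𝕜}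
    (hA : A.IsHermitian) (f : ℝ → ℝ) :
    (cfc f A).trace = ∑ i, (f (hA.eigenvalues i) : 𝕜) := by
  rw [hA.cfc_eq, IsHermitian.cfc, Unitary.conjStarAlgAut_apply, trace_mul_cycle,
    Unitary.coe_star_mul_self, one_mul, trace_diagonal]
  rfl

theorem re_trace_eq_sum_eigenvalues {A : Matrix n n ℂ} (hA : A.IsHermitian) :
    A.trace.re = ∑ i, hA.eigenvalues i := by
  simp [hA.trace_eq_sum_eigenvalues]

theorem vnEntropy_eq_re_trace_cfc {A : Matrix n n ℂ} (hA : A.IsHermitian) :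
    vnEntropy A = (cfc Real.negMulLog A).trace.re := by
  rw [vnEntropy, dif_pos hA, hA.trace_cfc, Complex.re_sum]
  simp

theorem neg_vnEntropy_eq_sum {A : Matrix n n ℂ} (hA : A.IsHermitian) :
    -vnEntropy A = ∑ i, hA.eigenvalues i * Real.log (hA.eigenvalues i) := by
  simp [vnEntropy, dif_pos hA, Real.negMulLog]

theorem re_trace_mul_matFun_log {A : Matrix n n ℂ} (hA : A.IsHermitian) :
    (A * matFun Real.log A).trace.re = -vnEntropy A := by
  have hmul : A * cfc Real.log A = cfc (fun x => -Real.negMulLog x) A := by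
    conv_lhs => enter [1]; rw [← cfc_id' ℝ A]
    rw [← cfc_mul _ _ A (hg := A.finite_real_spectrum.continuousOn _)]
    simp [Real.negMulLog]
  rw [matFun_eq_cfc _ hA, hmul, cfc_neg, trace_neg, Complex.neg_re, vnEntropy_eq_re_trace_cfc hA]

theorem vnEntropy_unitary_conj {A U : Matrix n n ℂ} (hA : A.IsHermitian)
    (hU : U ∈ unitaryGroup n ℂ) : vnEntropy (U * A * star U) = vnEntropy A := by
  let φ := (Unitary.conjStarAlgAut ℝ (Matrix n n ℂ) ⟨U, hU⟩).toStarAlgHom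
  have hφ : Continuous φ := by
    change Continuous fun X => U * X * star U
    fun_prop
  have hUA : (U * A * star U).IsHermitian := hA.isSelfAdjoint.conjugate U
  have hcfc : cfc Real.negMulLog (U * A * star U) = U * cfc Real.negMulLog A * star U :=
    (φ.map_cfc Real.negMulLog A (hφ := hφ)).symm
  rw [vnEntropy_eq_re_trace_cfc hA, vnEntropy_eq_re_trace_cfc hUA, hcfc, trace_mul_cycle,
    Unitary.star_mul_self_of_mem hU, one_mul]

theorem trace_conj_mul_conj {m R : Type*} [Fintype m] [CommRing R] [StarRing R]
    (U V D E : Matrix m m R) :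
    (U * D * star U * (V * E * star V)).trace
      = (D * (star U * V) * E * star (star U * V)).trace := by
  rw [star_mul, star_star, Matrix.mul_assoc, Matrix.mul_assoc, trace_mul_comm]
  simp only [Matrix.mul_assoc]

theorem trace_diagonal_mul_mul_diagonal_mul_star (d e : n → ℂ) (W : Matrix n n ℂ) :
    (diagonal d * W * diagonal e * star W).trace
      = ∑ i, ∑ j, d i * (Complex.normSq (W i j) : ℂ) * e j := by
  simp only [trace, Matrix.diag, mul_apply, diagonal_apply, star_apply, ite_mul, zero_mul,
    mul_ite, mul_zero, Finset.sum_ite_eq, Finset.sum_ite_eq', Finset.mem_univ, if_true]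
  refine Finset.sum_congr rfl fun i _ => Finset.sum_congr rfl fun j _ => ?_
  rw [Complex.normSq_eq_conj_mul_self, ← Complex.star_def]
  ring

theorem re_trace_cfc_mul_cfc {A B : Matrix n n ℂ} (hA : A.IsHermitian) (hB : B.IsHermitian)
    (f g : ℝ → ℝ) :
    (cfc f A * cfc g B).trace.re = ∑ i, ∑ j, f (hA.eigenvalues i) *
      Complex.normSq ((star (hA.eigenvectorUnitary : Matrix n n ℂ) * hB.eigenvectorUnitary) i j)
        * g (hB.eigenvalues j) := by
  rw [hA.cfc_eq, hB.cfc_eq, IsHermitian.cfc, IsHermitian.cfc, Unitary.conjStarAlgAut_apply,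
    Unitary.conjStarAlgAut_apply, trace_conj_mul_conj, trace_diagonal_mul_mul_diagonal_mul_star,
    Complex.re_sum]
  refine Finset.sum_congr rfl fun i _ => ?_
  rw [Complex.re_sum]
  refine Finset.sum_congr rfl fun j _ => ?_
  change ((f _ : ℂ) * (Complex.normSq _ : ℂ) * (g _ : ℂ)).re = _
  rw [← Complex.ofReal_mul, ← Complex.ofReal_mul, Complex.ofReal_re]

theorem normSq_mem_doublyStochastic {W : Matrix n n ℂ} (hW : W ∈ unitaryGroup n ℂ) :
    (of fun i j => Complex.normSq (W i j)) ∈ doublyStochastic ℝ n := by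
  have hrow (i : n) : ∑ j, (Complex.normSq (W i j) : ℂ) = (W * star W) i i := by
    simp [mul_apply, Complex.mul_conj]
  have hcol (j : n) : ∑ i, (Complex.normSq (W i j) : ℂ) = (star W * W) j j := by
    simp [mul_apply, Complex.normSq_eq_conj_mul_self]
  rw [Unitary.mul_star_self_of_mem hW] at hrow
  rw [Unitary.star_mul_self_of_mem hW] at hcol
  refine mem_doublyStochastic_iff_sum.2 ⟨fun i j => Complex.normSq_nonneg _, fun i => ?_, fun j => ?_⟩
  · exact_mod_cast (hrow i).trans (one_apply_eq i)
  · exact_mod_cast (hcol j).trans (one_apply_eq j)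

theorem Real.mul_log_le_mul_log_add_sub {p q : ℝ} (hp : 0 ≤ p) (hq : 0 < q) :
    p * Real.log q ≤ p * Real.log p + (q - p) := by
  rcases hp.eq_or_lt with rfl | hp
  · simpa using hq.le
  have h := Real.log_le_sub_one_of_pos (div_pos hq hp)
  rw [Real.log_div hq.ne' hp.ne'] at h
  have := mul_le_mul_of_nonneg_left h hp.le
  rw [mul_sub, mul_sub, mul_div_cancel₀ _ hp.ne', mul_one] at this
  linarith

theorem sum_mul_log_le_of_mem_doublyStochastic {p q : n → ℝ} {P : Matrix n n ℝ}
    (hP : P ∈ doublyStochastic ℝ n) (hp : ∀ i, 0 ≤ p i) (hq : ∀ j, 0 < q j)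
    (hpq : ∑ j, q j ≤ ∑ i, p i) :
    ∑ i, ∑ j, p i * P i j * Real.log (q j) ≤ ∑ i, p i * Real.log (p i) := by
  have hterm (i j : n) : p i * P i j * Real.log (q j)
      ≤ p i * P i j * Real.log (p i) + (P i j * q j - p i * P i j) := by
    have := mul_le_mul_of_nonneg_left (Real.mul_log_le_mul_log_add_sub (hp i) (hq j))
      (nonneg_of_mem_doublyStochastic hP (i := i) (j := j))
    linarith
  have hrow (i : n) : ∑ j, p i * P i j * Real.log (p i) = p i * Real.log (p i) := by
    rw [← Finset.sum_mul, ← Finset.mul_sum, sum_row_of_mem_doublyStochastic hP, mul_one]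
  have hmass : ∑ i, ∑ j, (P i j * q j - p i * P i j) = ∑ j, q j - ∑ i, p i := by
    simp only [Finset.sum_sub_distrib, ← Finset.mul_sum, sum_row_of_mem_doublyStochastic hP,
      mul_one]
    rw [Finset.sum_comm]
    simp only [← Finset.sum_mul, sum_col_of_mem_doublyStochastic hP, one_mul]
  calc ∑ i, ∑ j, p i * P i j * Real.log (q j)
      ≤ ∑ i, ∑ j, (p i * P i j * Real.log (p i) + (P i j * q j - p i * P i j)) :=
        Finset.sum_le_sum fun i _ => Finset.sum_le_sum fun j _ => hterm i j
    _ = ∑ i, p i * Real.log (p i) + (∑ j, q j - ∑ i, p i) := by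
        simp only [Finset.sum_add_distrib, hrow, ← hmass]
    _ ≤ ∑ i, p i * Real.log (p i) := by linarith

theorem relEnt_eq_neg_vnEntropy_sub {ρ : Matrix n n ℂ} (hρ : ρ.IsHermitian) (σ : Matrix n n ℂ) :
    relEnt ρ σ = -vnEntropy ρ - (ρ * matFun Real.log σ).trace.re := by
  rw [relEnt, Matrix.mul_sub, trace_sub, Complex.sub_re, re_trace_mul_matFun_log hρ]

theorem relEnt_self (ρ : Matrix n n ℂ) : relEnt ρ ρ = 0 := by
  simp [relEnt]

-- Klein's inequality: in the eigenbases of `σ` and `τ`, `Tr σ log τ` averages the `log q_j`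
-- against the doubly stochastic overlap matrix `|⟨u_i, v_j⟩|²`, and `log x ≤ x - 1` does the rest.
theorem relEnt_nonneg {σ τ : Matrix n n ℂ} (hσ : IsDensity σ) (hτ : τ.PosDef)
    (hτ1 : τ.trace = 1) : 0 ≤ relEnt σ τ := by
  have hσH : σ.IsHermitian := hσ.1.isHermitian
  have hτH : τ.IsHermitian := hτ.isHermitian
  have hcross : (σ * matFun Real.log τ).trace.re = ∑ i, ∑ j, hσH.eigenvalues i *
      Complex.normSq ((star (hσH.eigenvectorUnitary : Matrix n n ℂ) * hτH.eigenvectorUnitary) i j)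
        * Real.log (hτH.eigenvalues j) := by
    have h := re_trace_cfc_mul_cfc hσH hτH id Real.log
    rw [cfc_id ℝ σ] at h
    rw [matFun_eq_cfc _ hτH, h]
    rfl
  have hmass : ∑ j, hτH.eigenvalues j ≤ ∑ i, hσH.eigenvalues i := by
    rw [← re_trace_eq_sum_eigenvalues, ← re_trace_eq_sum_eigenvalues, hτ1, hσ.2]
  rw [relEnt_eq_neg_vnEntropy_sub hσH, hcross, neg_vnEntropy_eq_sum hσH, sub_nonneg]
  exact sum_mul_log_le_of_mem_doublyStochastic
    (normSq_mem_doublyStochastic (mul_mem (Unitary.star_mem (hσH.eigenvectorUnitary).2)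
      (hτH.eigenvectorUnitary).2))
    hσ.1.eigenvalues_nonneg hτ.eigenvalues_pos hmass

theorem IsDensity.nonempty {m : Type*} [Fintype m] {ρ : Matrix m m ℂ} (hρ : IsDensity ρ) :
    Nonempty m := by
  by_contra h
  rw [not_nonempty_iff] at h
  simpa [trace] using hρ.2

theorem IsDensity.unitary_conj {ρ U : Matrix n n ℂ} (hρ : IsDensity ρ)
    (hU : U ∈ unitaryGroup n ℂ) : IsDensity (U * ρ * star U) := by
  refine ⟨hρ.1.mul_mul_conjTranspose_same U, ?_⟩
  rw [trace_mul_cycle, Unitary.star_mul_self_of_mem hU, one_mul, hρ.2]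

section Gibbs

variable {H : Matrix n n ℂ} (hH : H.IsHermitian) (β : ℝ)
include hH

theorem gibbsZ_eq_sum : gibbsZ β H = ∑ i, Real.exp (-(β * hH.eigenvalues i)) := by
  rw [gibbsZ, matFun_eq_cfc _ hH, hH.trace_cfc, Complex.re_sum]
  rfl

theorem gibbsZ_pos [Nonempty n] : 0 < gibbsZ β H := by
  rw [gibbsZ_eq_sum hH]
  exact Finset.sum_pos (fun i _ => Real.exp_pos _) Finset.univ_nonempty

theorem gibbs_eq_cfc :
    gibbs β H = cfc (fun x => (gibbsZ β H)⁻¹ * Real.exp (-(β * x))) H := by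
  rw [gibbs, matFun_eq_cfc _ hH, cfc_const_mul _ (fun x => Real.exp (-(β * x))) H,
    ← Complex.ofReal_inv, Complex.coe_smul]

theorem trace_gibbs [Nonempty n] : (gibbs β H).trace = 1 := by
  have hsum : ∑ i, (gibbsZ β H)⁻¹ * Real.exp (-(β * hH.eigenvalues i)) = 1 := by
    rw [← Finset.mul_sum, ← gibbsZ_eq_sum hH, inv_mul_cancel₀ (gibbsZ_pos hH β).ne']
  rw [gibbs_eq_cfc hH, hH.trace_cfc, ← RCLike.ofReal_sum, hsum, RCLike.ofReal_one]

open scoped MatrixOrder in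
theorem gibbs_posDef [Nonempty n] : (gibbs β H).PosDef := by
  rw [← isStrictlyPositive_iff_posDef, gibbs_eq_cfc hH, cfc_isStrictlyPositive_iff _ H]
  exact fun x _ => mul_pos (inv_pos.2 (gibbsZ_pos hH β)) (Real.exp_pos _)

theorem matFun_log_gibbs [Nonempty n] :
    matFun Real.log (gibbs β H) = (-β) • H - Real.log (gibbsZ β H) • 1 := by
  have hZ := gibbsZ_pos hH β
  rw [matFun_eq_cfc _ (gibbs_posDef hH β).isHermitian, gibbs_eq_cfc hH,
    ← cfc_comp _ _ H (hg := H.finite_real_spectrum.image _ |>.continuousOn _)]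
  have hlog : Real.log ∘ (fun x => (gibbsZ β H)⁻¹ * Real.exp (-(β * x)))
      = fun x => (-β) * x - Real.log (gibbsZ β H) := by
    funext x
    simp only [Function.comp_apply]
    rw [Real.log_mul (inv_ne_zero hZ.ne') (Real.exp_ne_zero _), Real.log_inv, Real.log_exp]
    ring
  rw [hlog, cfc_sub (fun x => -β * x) (fun _ => Real.log (gibbsZ β H)) H, cfc_const_mul_id _ H,
    cfc_const _ H, Algebra.algebraMap_eq_smul_one]

theorem relEnt_gibbs [Nonempty n] {σ : Matrix n n ℂ} (hσ : σ.IsHermitian) (hσ1 : σ.trace = 1) :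
    relEnt σ (gibbs β H)
      = -vnEntropy σ + β * (H * σ).trace.re + Real.log (gibbsZ β H) := by
  rw [relEnt_eq_neg_vnEntropy_sub hσ, matFun_log_gibbs hH, Matrix.mul_sub, Matrix.mul_smul,
    Matrix.mul_smul, Matrix.mul_one, trace_sub, trace_smul, trace_smul, hσ1, trace_mul_comm σ]
  simp only [neg_smul, Complex.real_smul, mul_one, Complex.sub_re, Complex.neg_re,
    Complex.mul_re, Complex.ofReal_re, Complex.ofReal_im, zero_mul, sub_zero]
  ring

theorem vnEntropy_gibbs [Nonempty n] :
    vnEntropy (gibbs β H) = β * (H * gibbs β H).trace.re + Real.log (gibbsZ β H) := by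
  have h := relEnt_gibbs hH β (gibbs_posDef hH β).isHermitian (trace_gibbs hH β)
  rw [relEnt_self] at h
  linarith

end Gibbs

theorem alicki_fannes_ergotropy_bound_general {d : ℕ}
    (H : Matrix (Fin d) (Fin d) ℂ) (hH : H.IsHermitian)
    (β : ℝ) (hβ : 0 < β)
    (ρ : Matrix (Fin d) (Fin d) ℂ) (hρ : IsDensity ρ) :
    (∀ U : Matrix (Fin d) (Fin d) ℂ, IsUnitaryMat U →
      ((H * ρ).trace).re - ((H * (U * ρ * star U)).trace).re
        ≤ β⁻¹ * relEnt ρ (gibbs β H)) ∧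
    (vnEntropy (gibbs β H) = vnEntropy ρ →
      β⁻¹ * relEnt ρ (gibbs β H)
        = ((H * ρ).trace).re - ((H * gibbs β H).trace).re) := by
  have := hρ.nonempty
  have hrel := relEnt_gibbs hH β hρ.1.isHermitian hρ.2
  constructor
  · intro U hU
    have hσ := hρ.unitary_conj hU
    have hrelσ := relEnt_gibbs hH β hσ.1.isHermitian hσ.2
    rw [vnEntropy_unitary_conj hρ.1.isHermitian hU] at hrelσ
    have hklein := relEnt_nonneg hσ (gibbs_posDef hH β) (trace_gibbs hH β)
    have hgap : relEnt ρ (gibbs β H) = relEnt (U * ρ * star U) (gibbs β H)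
        + β * ((H * ρ).trace.re - (H * (U * ρ * star U)).trace.re) := by
      linarith
    rw [hgap, mul_add, inv_mul_cancel_left₀ hβ.ne']
    linarith [mul_nonneg (inv_nonneg.2 hβ.le) hklein]
  · intro hent
    rw [hrel, ← hent, vnEntropy_gibbs hH β]
    field_simp
    ring

/-- Alicki–Fannes ergotropy identity, single-copy bound:
`Tr(Hρ) - Tr(HUρU†) ≤ β⁻¹ S(ρ‖τ_β)`, and at the iso-entropic temperature
`β = β*` the bound equals the energy gap `Tr(Hρ) - Tr(Hτ_{β*})`. -/
theorem alicki_fannes_ergotropy_bound {d : ℕ}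
    (H : Matrix (Fin d) (Fin d) ℂ) (hH : H.IsHermitian)
    (hground : (∀ i, 0 ≤ hH.eigenvalues i) ∧ ∃ i, hH.eigenvalues i = 0)
    (β : ℝ) (hβ : 0 < β)
    (ρ : Matrix (Fin d) (Fin d) ℂ) (hρ : IsDensity ρ) :
    (∀ U : Matrix (Fin d) (Fin d) ℂ, IsUnitaryMat U →
      ((H * ρ).trace).re - ((H * (U * ρ * star U)).trace).re
        ≤ β⁻¹ * relEnt ρ (gibbs β H)) ∧
    (vnEntropy (gibbs β H) = vnEntropy ρ →
      β⁻¹ * relEnt ρ (gibbs β H)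
        = ((H * ρ).trace).re - ((H * gibbs β H).trace).re) :=
  alicki_fannes_ergotropy_bound_general H hH β hβ ρ hρ
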